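/- arXiv:2302.04632 — 3 statements merged into one kernel-verified Lean document; each statement's English description precedes it below -/
import Mathlib

section
/- Let F ∈ ℂ[t]³ be a vector-valued polynomial of degree n. Let λ ∈ ℂ(t) be a rational function with partial fraction decomposition λ = p + Σ_{i=1}^{m} Σ_{j=−k_i}^{−1} λ_{i,j}(t−β_i)^j, where p ∈ ℂ[t], the β_i ∈ ℂ are pairwise distinct, k_i ≥ 1, and λ_{i,j} ∈ ℂ. Set λ_{i,j} := 0 for j < −k_i. Then λ·F has a rational antiderivative componentwise if and only if for every i ∈ {1,…,m} one has Σ_{j=0}^{n} λ_{i,−1−j} f_j(β_i) = 0, where F(t) = Σ_{j=0}^n f_j(β_i)(t−β_i)^j is the Taylor expansion of F at β_i. -/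
/-!
Modulo derivatives of rational functions every power `(t - β) ^ w` with `w ≠ -1` vanishes, so
after expanding `F` in powers of `t - βᵢ`, the class of `λ·F` is `∑ᵢ rᵢ • [(t - βᵢ)⁻¹]` with
`rᵢ = ∑ⱼ λ_{i,-1-j} f_j(βᵢ)`. The classes `[(t - βᵢ)⁻¹]` are linearly independent: writing a
rational function as `a / b` with `a, b` coprime, its derivative has a pole of order at least two
at every zero of `b`, so a derivative never has a simple pole.
-/

/-- A rational function `g ∈ ℂ(t)` has a rational antiderivative if it can be written as
`(a′b − ab′)/b²` for polynomials `a, b` with `b ≠ 0`; equivalently, it is the derivative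
of the rational function `a/b`. -/
def HasRatAntideriv (g : RatFunc ℂ) : Prop :=
  ∃ a b : Polynomial ℂ, b ≠ 0 ∧
    g = algebraMap (Polynomial ℂ) (RatFunc ℂ) (Polynomial.derivative a * b - a * Polynomial.derivative b) /
        algebraMap (Polynomial ℂ) (RatFunc ℂ) (b ^ 2)

open Polynomial

theorem exists_wronskian_X_sub_C_pow_mul {R : Type*} [CommRing R] (a q : R[X]) (β : R) (e : ℕ) :
    ∃ u : R[X], wronskian ((X - C β) ^ (e + 1) * q) a = (X - C β) ^ e * u ∧
      u.eval β = -((e + 1) * q.eval β * a.eval β) := by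
  refine ⟨(X - C β) * q * derivative a - (C (e + 1 : R) * q + (X - C β) * derivative q) * a,
    ?_, by simp⟩
  simp only [wronskian, derivative_mul, derivative_pow, derivative_X_sub_C]
  push_cast
  ring

section

variable {K : Type*} [Field K] [CharZero K]

theorem exists_derivative_eq (q : K[X]) : ∃ a : K[X], derivative a = q := by
  induction q using Polynomial.induction_on' with
  | add p q hp hq =>
    obtain ⟨a, rfl⟩ := hp
    obtain ⟨b, rfl⟩ := hq
    exact ⟨a + b, derivative_add⟩
  | monomial n c =>
    refine ⟨monomial (n + 1) (c / (n + 1)), ?_⟩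
    rw [derivative_monomial, Nat.add_sub_cancel, Nat.cast_add_one,
      div_mul_cancel₀ _ (Nat.cast_add_one_ne_zero n)]

theorem eval_eq_zero_of_mul_sq_eq_wronskian_mul {a b N D : K[X]} {β : K} (hab : IsCoprime a b)
    (hb : b ≠ 0) (hD : D.eval β ≠ 0)
    (h : N * b ^ 2 = wronskian b a * ((X - C β) * D)) : N.eval β = 0 := by
  by_cases hbβ : b.eval β = 0
  · -- if `b` vanishes to order `e + 1` at `β`, the wronskian vanishes there to order exactly `e`,
    -- so `(a / b)'` has a pole of order `e + 2 ≥ 2`, which the right-hand side does not allow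
    exfalso
    obtain ⟨q, hbq, hq⟩ := b.exists_eq_pow_rootMultiplicity_mul_and_not_dvd hb β
    obtain ⟨e, he⟩ : ∃ e, b.rootMultiplicity β = e + 1 :=
      Nat.exists_eq_add_one.2 ((rootMultiplicity_pos hb).2 hbβ)
    rw [he] at hbq
    obtain ⟨u, hu, huβ⟩ := exists_wronskian_X_sub_C_pow_mul a q β e
    have hqβ : q.eval β ≠ 0 := fun h0 => hq (dvd_iff_isRoot.2 h0)
    have haβ : a.eval β ≠ 0 := by simpa [hbβ] using aeval_ne_zero_of_isCoprime hab β
    have hcancel : N * (X - C β) ^ (e + 1) * q ^ 2 = u * D := by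
      refine mul_right_cancel₀ (pow_ne_zero (e + 1) (X_sub_C_ne_zero β)) ?_
      rw [hbq, hu] at h
      linear_combination h
    have := congrArg (eval β) hcancel
    simp only [eval_mul, eval_pow, eval_sub, eval_X, eval_C, sub_self, zero_pow e.succ_ne_zero,
      mul_zero, zero_mul, huβ] at this
    exact mul_ne_zero (neg_ne_zero.2 (mul_ne_zero (mul_ne_zero
      (Nat.cast_add_one_ne_zero e) hqβ) haβ)) hD this.symm
  · have := congrArg (eval β) h
    simp only [eval_mul, eval_pow, eval_sub, eval_X, eval_C, sub_self, zero_mul, mul_zero] at this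
    exact (mul_eq_zero.1 this).resolve_right (pow_ne_zero 2 hbβ)

end

local notation "𝔸" => algebraMap ℂ[X] (RatFunc ℂ)

theorem algebraMap_X_sub_C (β : ℂ) : 𝔸 (X - C β) = RatFunc.X - RatFunc.C β := by
  simp [RatFunc.algebraMap_X, RatFunc.algebraMap_C]

theorem HasRatAntideriv.exists_isCoprime {g : RatFunc ℂ} (hg : HasRatAntideriv g) :
    ∃ a b : ℂ[X], IsCoprime a b ∧ b ≠ 0 ∧ g = 𝔸 (wronskian b a) / 𝔸 (b ^ 2) := by
  obtain ⟨a, b, hb, rfl⟩ := hg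
  obtain ⟨d, a₀, b₀, hd, hab₀, hb₀, rfl, rfl⟩ : ∃ d a₀ b₀ : ℂ[X],
      d ≠ 0 ∧ IsCoprime a₀ b₀ ∧ b₀ ≠ 0 ∧ a = d * a₀ ∧ b = d * b₀ :=
    ⟨gcd a b, _, _, gcd_ne_zero_of_right hb, isCoprime_div_gcd_div_gcd hb,
      right_div_gcd_ne_zero hb,
      (EuclideanDomain.mul_div_cancel' (gcd_ne_zero_of_right hb) (gcd_dvd_left a b)).symm,
      (EuclideanDomain.mul_div_cancel' (gcd_ne_zero_of_right hb) (gcd_dvd_right a b)).symm⟩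
  refine ⟨a₀, b₀, hab₀, hb₀, ?_⟩
  have hnum : derivative (d * a₀) * (d * b₀) - d * a₀ * derivative (d * b₀) =
      d ^ 2 * wronskian b₀ a₀ := by
    simp only [wronskian, derivative_mul]
    ring
  rw [hnum, mul_pow, map_mul, map_mul,
    mul_div_mul_left _ _ (RatFunc.algebraMap_ne_zero (pow_ne_zero 2 hd))]

theorem HasRatAntideriv.eval_eq_zero_of_eq_div {g : RatFunc ℂ} (hg : HasRatAntideriv g)
    {N D : ℂ[X]} {β : ℂ} (hD : D.eval β ≠ 0) (h : g = 𝔸 N / 𝔸 ((X - C β) * D)) :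
    N.eval β = 0 := by
  obtain ⟨a, b, hab, hb, rfl⟩ := hg.exists_isCoprime
  refine eval_eq_zero_of_mul_sq_eq_wronskian_mul hab hb hD (RatFunc.algebraMap_injective ℂ ?_)
  rw [div_eq_div_iff (RatFunc.algebraMap_ne_zero (pow_ne_zero 2 hb))
    (RatFunc.algebraMap_ne_zero (mul_ne_zero (X_sub_C_ne_zero β) (by rintro rfl; simp at hD)))]
    at h
  simpa only [map_mul] using h.symm

def ratAntiderivs : Submodule ℂ (RatFunc ℂ) where
  carrier := {g | HasRatAntideriv g}
  zero_mem' := ⟨0, 1, one_ne_zero, by simp⟩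
  add_mem' := by
    rintro _ _ ⟨a₁, b₁, hb₁, rfl⟩ ⟨a₂, b₂, hb₂, rfl⟩
    refine ⟨a₁ * b₂ + a₂ * b₁, b₁ * b₂, mul_ne_zero hb₁ hb₂, ?_⟩
    rw [div_add_div _ _ (RatFunc.algebraMap_ne_zero (pow_ne_zero 2 hb₁))
      (RatFunc.algebraMap_ne_zero (pow_ne_zero 2 hb₂)), div_eq_div_iff
      (mul_ne_zero (RatFunc.algebraMap_ne_zero (pow_ne_zero 2 hb₁))
        (RatFunc.algebraMap_ne_zero (pow_ne_zero 2 hb₂)))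
      (RatFunc.algebraMap_ne_zero (pow_ne_zero 2 (mul_ne_zero hb₁ hb₂)))]
    simp only [← map_mul, ← map_add]
    refine congrArg 𝔸 ?_
    simp only [derivative_add, derivative_mul]
    ring
  smul_mem' := by
    rintro r _ ⟨a, b, hb, rfl⟩
    refine ⟨C r * a, b, hb, ?_⟩
    rw [Algebra.smul_def, IsScalarTower.algebraMap_apply ℂ ℂ[X] (RatFunc ℂ), ← mul_div_assoc,
      ← map_mul, Polynomial.algebraMap_eq, derivative_mul, derivative_C, zero_mul, zero_add,
      mul_sub, mul_assoc, mul_assoc]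

theorem mem_ratAntiderivs {g : RatFunc ℂ} : g ∈ ratAntiderivs ↔ HasRatAntideriv g := Iff.rfl

theorem algebraMap_mem_ratAntiderivs (q : ℂ[X]) : 𝔸 q ∈ ratAntiderivs := by
  obtain ⟨a, rfl⟩ := exists_derivative_eq q
  exact ⟨a, 1, one_ne_zero, by simp⟩

theorem X_sub_C_zpow_mem_ratAntiderivs (β : ℂ) {w : ℤ} (hw : w ≠ -1) :
    (RatFunc.X - RatFunc.C β) ^ w ∈ ratAntiderivs := by
  rw [← algebraMap_X_sub_C]
  obtain ⟨e, rfl⟩ | ⟨e, rfl⟩ : (∃ e : ℕ, w = e) ∨ ∃ e : ℕ, w = -(e + 2 : ℕ) := by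
    rcases le_or_gt 0 w with hw₀ | hw₀
    · exact .inl ⟨w.toNat, by omega⟩
    · exact .inr ⟨(-w - 2).toNat, by omega⟩
  · rw [zpow_natCast, ← map_pow]
    exact algebraMap_mem_ratAntiderivs _
  · -- `(X - β) ^ (-(e + 2))` is the derivative of `-(X - β) ^ (-(e + 1)) / (e + 1)`
    refine ⟨C (-(e + 1 : ℂ)⁻¹), (X - C β) ^ (e + 1), pow_ne_zero _ (X_sub_C_ne_zero β), ?_⟩
    have hnum : derivative (C (-(e + 1 : ℂ)⁻¹)) * (X - C β) ^ (e + 1) -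
        C (-(e + 1 : ℂ)⁻¹) * derivative ((X - C β) ^ (e + 1)) = (X - C β) ^ e := by
      rw [derivative_C, derivative_X_sub_C_pow, zero_mul, zero_sub, ← mul_assoc, ← C_mul,
        neg_mul, Nat.cast_add_one, inv_mul_cancel₀ (Nat.cast_add_one_ne_zero e), C_neg, C_1,
        neg_mul, one_mul, neg_neg, Nat.add_sub_cancel]
    rw [hnum, ← pow_mul, map_pow, map_pow, ← zpow_natCast, ← zpow_natCast, ← zpow_sub₀
      (RatFunc.algebraMap_ne_zero (X_sub_C_ne_zero β))]
    congr 1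
    push_cast
    ring

open Lagrange in
theorem linearIndependent_mkQ_inv_X_sub_C {ι : Type*} [Fintype ι] {β : ι → ℂ}
    (hβ : Function.Injective β) :
    LinearIndependent ℂ fun i => ratAntiderivs.mkQ (RatFunc.X - RatFunc.C (β i))⁻¹ := by
  classical
  rw [Fintype.linearIndependent_iff]
  intro r hr i
  replace hr : HasRatAntideriv (∑ j, r j • (RatFunc.X - RatFunc.C (β j))⁻¹) := by
    rw [← mem_ratAntiderivs, ← Submodule.Quotient.mk_eq_zero, ← Submodule.mkQ_apply, map_sum]
    simpa only [map_smul] using hr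
  have hnode : ∀ j, eval (β j) (nodal (Finset.univ.erase j) β) ≠ 0 := fun j =>
    eval_nodal_not_at_node fun j' hj' => hβ.ne (Finset.ne_of_mem_erase hj').symm
  have hsum : ∑ j, r j • (RatFunc.X - RatFunc.C (β j))⁻¹ =
      𝔸 (∑ j, C (r j) * nodal (Finset.univ.erase j) β) /
        𝔸 ((X - C (β i)) * nodal (Finset.univ.erase i) β) := by
    rw [← nodal_eq_mul_nodal_erase (Finset.mem_univ i), map_sum, Finset.sum_div]
    refine Finset.sum_congr rfl fun j _ => ?_
    rw [nodal_eq_mul_nodal_erase (Finset.mem_univ j), map_mul, map_mul,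
      mul_div_mul_right _ _ (RatFunc.algebraMap_ne_zero nodal_ne_zero), algebraMap_X_sub_C,
      RatFunc.algebraMap_C, RatFunc.smul_eq_C_mul, div_eq_mul_inv]
  have hN := hr.eval_eq_zero_of_eq_div (hnode i) hsum
  rw [eval_finsetSum, Finset.sum_eq_single i (fun j _ hji => by
    rw [eval_mul, eval_nodal_at_node (Finset.mem_erase.2 ⟨hji.symm, Finset.mem_univ i⟩),
      mul_zero]) (by simp), eval_mul, eval_C] at hN
  exact (mul_eq_zero.1 hN).resolve_right (hnode i)

theorem algebraMap_eq_sum_taylor_coeff_smul_zpow {P : ℂ[X]} {n : ℕ} (hP : P.natDegree ≤ n)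
    (β : ℂ) : 𝔸 P = ∑ s ∈ Finset.range (n + 1),
      (taylor β P).coeff s • (RatFunc.X - RatFunc.C β) ^ (s : ℤ) := by
  conv_lhs => rw [← sum_taylor_eq P β]
  rw [sum_over_range' _ (by simp) (n + 1) (by rw [natDegree_taylor]; omega), map_sum]
  refine Finset.sum_congr rfl fun s _ => ?_
  rw [map_mul, map_pow, algebraMap_X_sub_C, zpow_natCast, RatFunc.algebraMap_C,
    RatFunc.smul_eq_C_mul]

theorem mkQ_zpow_X_sub_C (β : ℂ) (w : ℤ) :
    ratAntiderivs.mkQ ((RatFunc.X - RatFunc.C β) ^ w) =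
      (if w = -1 then 1 else 0 : ℂ) • ratAntiderivs.mkQ (RatFunc.X - RatFunc.C β)⁻¹ := by
  split_ifs with hw
  · rw [hw, zpow_neg_one, one_smul]
  · rw [zero_smul, Submodule.mkQ_apply, Submodule.Quotient.mk_eq_zero]
    exact X_sub_C_zpow_mem_ratAntiderivs β hw

theorem mkQ_sum_smul_zpow_mul {P : ℂ[X]} {n : ℕ} (hP : P.natDegree ≤ n) (β : ℂ) (k : ℕ)
    {c : ℤ → ℂ} (hc : ∀ j < -(k : ℤ), c j = 0) :
    ratAntiderivs.mkQ
        ((∑ j ∈ Finset.Icc (-(k : ℤ)) (-1), c j • (RatFunc.X - RatFunc.C β) ^ j) * 𝔸 P) =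
      (∑ s ∈ Finset.range (n + 1), c (-1 - s) * (taylor β P).coeff s) •
        ratAntiderivs.mkQ (RatFunc.X - RatFunc.C β)⁻¹ := by
  have hX : RatFunc.X - RatFunc.C β ≠ 0 := by
    rw [← algebraMap_X_sub_C]; exact RatFunc.algebraMap_ne_zero (X_sub_C_ne_zero β)
  rw [algebraMap_eq_sum_taylor_coeff_smul_zpow hP β, Finset.sum_mul_sum]
  simp only [smul_mul_smul_comm, ← zpow_add₀ hX, map_sum, map_smul, mkQ_zpow_X_sub_C,
    smul_smul, ← Finset.sum_smul]
  congr 1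
  rw [Finset.sum_comm]
  refine Finset.sum_congr rfl fun s _ => ?_
  -- only `j = -1 - s` contributes, and `c (-1 - s) = 0` when that index lies below `-k`
  simp only [mul_ite, mul_one, mul_zero, ← eq_sub_iff_add_eq]
  rw [Finset.sum_ite_eq', ite_eq_left_iff, Finset.mem_Icc]
  intro hs
  rw [hc _ (by omega), zero_mul]

theorem hasRatAntideriv_iff_all_zero_residua_general (n : ℕ) (F : Fin 3 → Polynomial ℂ)
    (hdeg : ∀ i, (F i).natDegree ≤ n)
    (m : ℕ) (β : Fin m → ℂ) (hβ : Function.Injective β)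
    (k : Fin m → ℕ)
    (p : Polynomial ℂ) (c : Fin m → ℤ → ℂ)
    (hc : ∀ (i : Fin m) (j : ℤ), j < -(k i : ℤ) → c i j = 0)
    (lam : RatFunc ℂ)
    (hlam : lam = algebraMap (Polynomial ℂ) (RatFunc ℂ) p +
      ∑ i : Fin m, ∑ j ∈ Finset.Icc (-(k i : ℤ)) (-1),
        c i j • (RatFunc.X - RatFunc.C (β i)) ^ j) :
    (∀ l : Fin 3, HasRatAntideriv (lam * algebraMap (Polynomial ℂ) (RatFunc ℂ) (F l))) ↔
      ∀ i : Fin m,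
        ∑ j ∈ Finset.range (n + 1),
          c i (-1 - (j : ℤ)) • (fun l => (Polynomial.taylor (β i) (F l)).coeff j) =
        (0 : Fin 3 → ℂ) := by
  have hresidue : ∀ l, ratAntiderivs.mkQ (lam * 𝔸 (F l)) =
      ∑ i, (∑ s ∈ Finset.range (n + 1), c i (-1 - s) * (taylor (β i) (F l)).coeff s) •
        ratAntiderivs.mkQ (RatFunc.X - RatFunc.C (β i))⁻¹ := by
    intro l
    rw [hlam, add_mul, Finset.sum_mul, map_add, ← map_mul, Submodule.mkQ_apply,
      (Submodule.Quotient.mk_eq_zero _).2 (algebraMap_mem_ratAntiderivs _), zero_add, map_sum]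
    exact Finset.sum_congr rfl fun i _ => mkQ_sum_smul_zpow_mul (hdeg l) (β i) (k i) (hc i)
  have hindep := Fintype.linearIndependent_iff.1 (linearIndependent_mkQ_inv_X_sub_C hβ)
  calc (∀ l, HasRatAntideriv (lam * 𝔸 (F l)))
      ↔ ∀ l, ratAntiderivs.mkQ (lam * 𝔸 (F l)) = 0 := by
        simp only [Submodule.mkQ_apply, Submodule.Quotient.mk_eq_zero, mem_ratAntiderivs]
    _ ↔ ∀ l i, ∑ s ∈ Finset.range (n + 1), c i (-1 - s) * (taylor (β i) (F l)).coeff s = 0 := by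
        refine forall_congr' fun l => ?_
        rw [hresidue]
        exact ⟨hindep _, fun h => by simp [h]⟩
    _ ↔ _ := by
        rw [forall_comm]
        simp only [funext_iff, Finset.sum_apply, Pi.smul_apply, smul_eq_mul, Pi.zero_apply]

/-- Let `F ∈ ℂ[t]³` have degree `n` and let
`λ = p + Σ_{i=1}^{m} Σ_{j=−k_i}^{−1} λ_{i,j}(t−β_i)^j` be a partial fraction decomposition
with pairwise distinct `β_i`, `k_i ≥ 1`, and `λ_{i,j} = 0` for `j < −k_i`.  Then `λ·F` has a
rational antiderivative componentwise if and only if for every `i` one has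
`Σ_{j=0}^{n} λ_{i,−1−j} f_j(β_i) = 0`, where `f_j(β_i)` are the Taylor coefficients of `F`
at `β_i`. -/
theorem hasRatAntideriv_iff_all_zero_residua (n : ℕ) (F : Fin 3 → Polynomial ℂ)
    (hdeg : ∀ i, (F i).natDegree ≤ n) (hlead : ∃ i, (F i).natDegree = n)
    (m : ℕ) (β : Fin m → ℂ) (hβ : Function.Injective β)
    (k : Fin m → ℕ) (hk : ∀ i, 1 ≤ k i)
    (p : Polynomial ℂ) (c : Fin m → ℤ → ℂ)
    (hc : ∀ (i : Fin m) (j : ℤ), j < -(k i : ℤ) → c i j = 0)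
    (lam : RatFunc ℂ)
    (hlam : lam = algebraMap (Polynomial ℂ) (RatFunc ℂ) p +
      ∑ i : Fin m, ∑ j ∈ Finset.Icc (-(k i : ℤ)) (-1),
        c i j • (RatFunc.X - RatFunc.C (β i)) ^ j) :
    (∀ l : Fin 3, HasRatAntideriv (lam * algebraMap (Polynomial ℂ) (RatFunc ℂ) (F l))) ↔
      ∀ i : Fin m,
        ∑ j ∈ Finset.range (n + 1),
          c i (-1 - (j : ℤ)) • (fun l => (Polynomial.taylor (β i) (F l)).coeff j) =
        (0 : Fin 3 → ℂ) :=
  hasRatAntideriv_iff_all_zero_residua_general n F hdeg m β hβ k p c hc lam hlam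
end

section
/- Let β ∈ ℂ and let f_0, …, f_n ∈ ℂ³ with f_0 ≠ 0. Consider the linear map that sends a tuple (λ_{−n−1}, …, λ_{−1}) ∈ ℂ^{n+1} satisfying the zero-residuum constraint Σ_{j=0}^{n} λ_{−1−j} f_j = 0 to the tuple of Laurent coefficients (r_{−n}, …, r_{−1}, r_1, …, r_n) ∈ (ℂ³)^{2n} defined by r_j := (1/j)·Σ_{i=0}^{n} λ_{j−1−i} f_i (with the convention λ_m := 0 for m ∉ {−n−1, …, −1}). This map is injective. -/
open Finset

/- The Laurent coefficient `r_j` is, up to the factor `1/j`, the `j - 1`-st coefficient of the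
convolution `λ * f`, and the residue condition says that the `-1`-st one vanishes too. So the
difference `e` of two preimages of the same tuple has `(e * f)_m = 0` for `-n-1 ≤ m ≤ -1`; as `e`
vanishes below `-n-1` and `f_0 ≠ 0`, the triangular system `(e * f)_m = e_m f_0 + (earlier terms)`
forces `e_m = 0` successively for `m = -n-1, …, -1`. -/

theorem eq_zero_of_convolution_eq_zero {R M : Type*} [Semiring R] [AddCommMonoid M] [Module R M]
    [NoZeroSMulDivisors R M] {f : ℕ → M} (hf0 : f 0 ≠ 0) {n : ℕ} {e : ℤ → R} {a b : ℤ}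
    (he : ∀ m < a, e m = 0)
    (hsum : ∀ m, a ≤ m → m ≤ b → ∑ i ∈ range (n + 1), e (m - i) • f i = 0) :
    ∀ m ≤ b, e m = 0 := by
  suffices h : ∀ k : ℕ, ∀ m ≤ b, m < a + k → e m = 0 from
    fun m hm ↦ h ((m - a).toNat + 1) m hm (by omega)
  intro k
  induction k with
  | zero => exact fun m _ hm ↦ he m (by simpa using hm)
  | succ k ih =>
    intro m hmb hmk
    push_cast at hmk
    rcases lt_or_eq_of_le (show m ≤ a + k by omega) with hlt | rfl
    · exact ih m hmb hlt
    have h := hsum _ (by omega) hmb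
    rw [sum_eq_single_of_mem 0 (by simp)] at h
    · simpa using (eq_zero_or_eq_zero_of_smul_eq_zero h).resolve_right hf0
    · intro i _ hi
      rw [ih _ (by omega) (by omega), zero_smul]

theorem laurent_coefficients_map_injective_general (n : ℕ) (f : ℕ → Fin 3 → ℂ)
    (hf0 : f 0 ≠ 0) (c d : ℤ → ℂ)
    (hc : ∀ m : ℤ, m ∉ Finset.Icc (-(n : ℤ) - 1) (-1) → c m = 0)
    (hd : ∀ m : ℤ, m ∉ Finset.Icc (-(n : ℤ) - 1) (-1) → d m = 0)
    (hresc : ∑ j ∈ Finset.range (n + 1), c (-1 - (j : ℤ)) • f j = (0 : Fin 3 → ℂ))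
    (hresd : ∑ j ∈ Finset.range (n + 1), d (-1 - (j : ℤ)) • f j = (0 : Fin 3 → ℂ))
    (heq : ∀ j ∈ Finset.Icc (-(n : ℤ)) (n : ℤ), j ≠ 0 →
      ((j : ℂ))⁻¹ • ∑ i ∈ Finset.range (n + 1), c (j - 1 - (i : ℤ)) • f i =
      ((j : ℂ))⁻¹ • ∑ i ∈ Finset.range (n + 1), d (j - 1 - (i : ℤ)) • f i) :
    c = d := by
  have hdiff : ∀ m ∉ Icc (-(n : ℤ) - 1) (-1), (c - d) m = 0 := fun m hm ↦ by
    simp [hc m hm, hd m hm]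
  have hsum : ∀ m, -(n : ℤ) - 1 ≤ m → m ≤ -1 →
      ∑ i ∈ range (n + 1), (c - d) (m - i) • f i = 0 := by
    intro m hlo hhi
    simp only [Pi.sub_apply, sub_smul, sum_sub_distrib, sub_eq_zero]
    rcases eq_or_lt_of_le hhi with rfl | hlt
    · exact hresc.trans hresd.symm
    · have hj : m + 1 ≠ 0 := by omega
      have h := heq (m + 1) (mem_Icc.mpr ⟨by omega, by omega⟩) hj
      simp only [add_sub_cancel_right] at h
      exact smul_right_injective _ (inv_ne_zero (Int.cast_ne_zero.mpr hj)) h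
  funext m
  rw [← sub_eq_zero]
  by_cases hm : m ≤ -1
  · exact eq_zero_of_convolution_eq_zero hf0 (fun m' hm' ↦ hdiff m' (by simp only [mem_Icc]; omega)) hsum m hm
  · exact hdiff m (by simp only [mem_Icc]; omega)

/-- If `f_0 ≠ 0`, the linear map sending a tuple `(λ_{−n−1}, …, λ_{−1})`
(encoded as `c : ℤ → ℂ` supported on `{−n−1, …, −1}`) satisfying the zero-residuum
constraint `Σ_{j=0}^{n} c_{−1−j} f_j = 0` to the Laurent coefficients
`r_j = (1/j)·Σ_{i=0}^{n} c_{j−1−i} f_i`, `j ∈ {−n, …, −1, 1, …, n}`, is injective. -/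
theorem laurent_coefficients_map_injective (n : ℕ) (β : ℂ) (f : ℕ → Fin 3 → ℂ)
    (hf0 : f 0 ≠ 0) (c d : ℤ → ℂ)
    (hc : ∀ m : ℤ, m ∉ Finset.Icc (-(n : ℤ) - 1) (-1) → c m = 0)
    (hd : ∀ m : ℤ, m ∉ Finset.Icc (-(n : ℤ) - 1) (-1) → d m = 0)
    (hresc : ∑ j ∈ Finset.range (n + 1), c (-1 - (j : ℤ)) • f j = (0 : Fin 3 → ℂ))
    (hresd : ∑ j ∈ Finset.range (n + 1), d (-1 - (j : ℤ)) • f j = (0 : Fin 3 → ℂ))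
    (heq : ∀ j ∈ Finset.Icc (-(n : ℤ)) (n : ℤ), j ≠ 0 →
      ((j : ℂ))⁻¹ • ∑ i ∈ Finset.range (n + 1), c (j - 1 - (i : ℤ)) • f i =
      ((j : ℂ))⁻¹ • ∑ i ∈ Finset.range (n + 1), d (j - 1 - (i : ℤ)) • f i) :
    c = d :=
  laurent_coefficients_map_injective_general n f hf0 c d hc hd hresc hresd heq
end

section
/- Let I ⊆ ℝ be an open interval, let λ : I → ℝ and F : I → ℝ³ be differentiable, and let r : I → ℝ³ be differentiable with r′(t) = λ(t)·F(t) for all t ∈ I. If t₀ ∈ I satisfies λ(t₀) ≠ 0 and F(t₀) ≠ 0, then the curvature of r at t₀ satisfies ‖r′(t₀) × r″(t₀)‖ / ‖r′(t₀)‖³ = ‖F(t₀) × F′(t₀)‖ / (‖r′(t₀)‖ · ‖F(t₀)‖²). In particular, the curvature at t₀ is completely determined by the velocity vector r′(t₀) together with F(t₀) and F′(t₀). -/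
open scoped Matrix

/-! Differentiating `r′ = λ F` gives `r″ = λ F′ + λ′ F`. The term `λ′ F` is parallel to `r′` and
drops out of `r′ × r″ = λ² (F × F′)`, and `‖r′‖ = |λ| ‖F‖` turns the curvature formula into the
claimed one. -/

noncomputable def cross3 (u v : EuclideanSpace ℝ (Fin 3)) : EuclideanSpace ℝ (Fin 3) :=
  (WithLp.equiv 2 (Fin 3 → ℝ)).symm ((WithLp.equiv 2 (Fin 3 → ℝ) u) ⨯₃ (WithLp.equiv 2 (Fin 3 → ℝ) v))

open Filter Topology

section CrossProduct

variable (c : ℝ) (u v w : EuclideanSpace ℝ (Fin 3))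

lemma cross3_smul_left : cross3 (c • u) v = c • cross3 u v := by
  simp [cross3]

lemma cross3_smul_right : cross3 u (c • v) = c • cross3 u v := by
  simp [cross3]

lemma cross3_add_right : cross3 u (v + w) = cross3 u v + cross3 u w := by
  simp [cross3]

lemma cross3_self : cross3 u u = 0 := by
  simp [cross3, cross_self]

lemma cross3_smul_smul_add_smul (d : ℝ) :
    cross3 (c • u) (c • v + d • u) = c ^ 2 • cross3 u v := by
  rw [cross3_smul_left, cross3_add_right, cross3_smul_right, cross3_smul_right, cross3_self,
    smul_zero, add_zero, smul_smul, sq]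

lemma norm_cross3_smul_smul_add_smul_div (d : ℝ) :
    ‖cross3 (c • u) (c • v + d • u)‖ / ‖c • u‖ ^ 3 =
      ‖cross3 u v‖ / (‖c • u‖ * ‖u‖ ^ 2) := by
  rw [cross3_smul_smul_add_smul, norm_smul, norm_smul, norm_pow, Real.norm_eq_abs]
  -- if `c • u = 0`, both sides are junk quotients `_ / 0 = 0`
  rcases eq_or_ne |c| 0 with hc | hc
  · simp [hc]
  rcases eq_or_ne ‖u‖ 0 with hu | hu
  · simp [hu]
  field_simp

end CrossProduct

lemma deriv_deriv_eq_of_hasDerivAt_smul {𝕜 E : Type*} [NontriviallyNormedField 𝕜]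
    [NormedAddCommGroup E] [NormedSpace 𝕜 E] {lam : 𝕜 → 𝕜} {F r : 𝕜 → E} {t₀ : 𝕜}
    (hr : ∀ᶠ t in 𝓝 t₀, HasDerivAt r (lam t • F t) t) (hlam : DifferentiableAt 𝕜 lam t₀)
    (hF : DifferentiableAt 𝕜 F t₀) :
    deriv (deriv r) t₀ = lam t₀ • deriv F t₀ + deriv lam t₀ • F t₀ := by
  have hderiv : deriv r =ᶠ[𝓝 t₀] fun t => lam t • F t := hr.mono fun _ ht => ht.deriv
  rw [hderiv.deriv_eq]
  exact (hlam.hasDerivAt.smul hF.hasDerivAt).deriv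

theorem curvature_determined_by_tangent_field_general (a b : ℝ) (lam : ℝ → ℝ)
    (F r : ℝ → EuclideanSpace ℝ (Fin 3))
    (hlam : ∀ t ∈ Set.Ioo a b, DifferentiableAt ℝ lam t)
    (hF : ∀ t ∈ Set.Ioo a b, DifferentiableAt ℝ F t)
    (hr : ∀ t ∈ Set.Ioo a b, HasDerivAt r (lam t • F t) t)
    (t₀ : ℝ) (ht₀ : t₀ ∈ Set.Ioo a b) :
    ‖cross3 (deriv r t₀) (deriv (deriv r) t₀)‖ / ‖deriv r t₀‖ ^ 3 =
      ‖cross3 (F t₀) (deriv F t₀)‖ / (‖deriv r t₀‖ * ‖F t₀‖ ^ 2) := by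
  have hr' : ∀ᶠ t in 𝓝 t₀, HasDerivAt r (lam t • F t) t :=
    eventually_of_mem (isOpen_Ioo.mem_nhds ht₀) hr
  rw [deriv_deriv_eq_of_hasDerivAt_smul hr' (hlam t₀ ht₀) (hF t₀ ht₀), (hr t₀ ht₀).deriv]
  exact norm_cross3_smul_smul_add_smul_div _ _ _ _

/-- If `r′ = λ·F` on an open interval with `λ`, `F` differentiable and
`λ(t₀) ≠ 0`, `F(t₀) ≠ 0`, then the curvature of `r` at `t₀` satisfies
`‖r′(t₀) × r″(t₀)‖ / ‖r′(t₀)‖³ = ‖F(t₀) × F′(t₀)‖ / (‖r′(t₀)‖·‖F(t₀)‖²)`. -/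
theorem curvature_determined_by_tangent_field (a b : ℝ) (lam : ℝ → ℝ)
    (F r : ℝ → EuclideanSpace ℝ (Fin 3))
    (hlam : ∀ t ∈ Set.Ioo a b, DifferentiableAt ℝ lam t)
    (hF : ∀ t ∈ Set.Ioo a b, DifferentiableAt ℝ F t)
    (hr : ∀ t ∈ Set.Ioo a b, HasDerivAt r (lam t • F t) t)
    (t₀ : ℝ) (ht₀ : t₀ ∈ Set.Ioo a b) (hlam₀ : lam t₀ ≠ 0) (hF₀ : F t₀ ≠ 0) :
    ‖cross3 (deriv r t₀) (deriv (deriv r) t₀)‖ / ‖deriv r t₀‖ ^ 3 =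
      ‖cross3 (F t₀) (deriv F t₀)‖ / (‖deriv r t₀‖ * ‖F t₀‖ ^ 2) :=
  curvature_determined_by_tangent_field_general a b lam F r hlam hF hr t₀ ht₀
end
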